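/- arXiv:2012.13886 — 2 statements merged into one kernel-verified Lean document; each statement's English description precedes it below -/
import Mathlib

section
/- Let G be a profinite group and A a closed subset with positive Haar measure m(A) > 0. Then m(A) = inf{ |AN/N| / |G/N| : N a normal open subgroup of G }, where AN/N denotes the image of A in the finite quotient G/N. -/
/-!
`A ⊆ AN`, and `AN = π⁻¹(π A)` for the projection `π : G → G ⧸ N` is a union of `|π A|` cosets
of `N`, each of measure `1 / |G ⧸ N|`; this gives `m(A) ≤ |AN/N| / |G/N|`. Conversely, by outer
regularity `A` lies in an open `U` with `m(U) < m(A) + ε`, and since `A` is compact and the open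
normal subgroups form a neighbourhood basis of `1` in a profinite group, `AN ⊆ U` for some `N`.
-/

open MeasureTheory
open scoped ENNReal Pointwise

lemma QuotientGroup.preimage_mk_singleton_mk {G : Type*} [Group G] (N : Subgroup G) (g : G) :
    (QuotientGroup.mk : G → G ⧸ N) ⁻¹' {(g : G ⧸ N)} = g • (N : Set G) := by
  ext x
  rw [Set.mem_preimage, Set.mem_singleton_iff, eq_comm, QuotientGroup.eq,
    Set.mem_smul_set_iff_inv_smul_mem, smul_eq_mul, SetLike.mem_coe]

section Measure

variable {G : Type*} [Group G] [MeasurableSpace G] [MeasurableMul G]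

lemma measure_preimage_quotientGroup_mk (μ : Measure G) [μ.IsMulLeftInvariant] (N : Subgroup G)
    (hN : MeasurableSet (N : Set G)) {T : Set (G ⧸ N)} (hT : T.Finite) :
    μ ((QuotientGroup.mk : G → G ⧸ N) ⁻¹' T) = T.ncard * μ N := by
  have hfiber (t : G ⧸ N) : μ ((QuotientGroup.mk : G → G ⧸ N) ⁻¹' {t}) = μ N := by
    obtain ⟨g, rfl⟩ := QuotientGroup.mk_surjective t
    rw [QuotientGroup.preimage_mk_singleton_mk, measure_smul]
  lift T to Finset (G ⧸ N) using hT
  rw [← Set.biUnion_preimage_singleton, Finset.set_biUnion_coe, measure_biUnion_finset]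
  · simp_rw [hfiber, Finset.sum_const, nsmul_eq_mul, Set.ncard_coe_finset]
  · exact fun s _ t _ hst ↦ (Set.disjoint_singleton.2 hst).preimage _
  · intro t _
    obtain ⟨g, rfl⟩ := QuotientGroup.mk_surjective t
    rw [QuotientGroup.preimage_mk_singleton_mk]
    exact hN.const_smul g

lemma toReal_measure_preimage_quotientGroup_mk (μ : Measure G) [μ.IsMulLeftInvariant]
    [IsProbabilityMeasure μ] (N : Subgroup G) [N.FiniteIndex] (hN : MeasurableSet (N : Set G))
    (T : Set (G ⧸ N)) :
    (μ ((QuotientGroup.mk : G → G ⧸ N) ⁻¹' T)).toReal = (T.ncard : ℝ) / Nat.card (G ⧸ N) := by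
  have hindex : (N.index : ℝ) * (μ N).toReal = 1 := by
    simpa using congrArg ENNReal.toReal (N.index_mul_measure hN μ)
  have hpos : (N.index : ℝ) ≠ 0 := by exact_mod_cast N.index_ne_zero_of_finite
  rw [measure_preimage_quotientGroup_mk μ N hN T.toFinite, ENNReal.toReal_mul,
    ENNReal.toReal_natCast, ← Subgroup.index_eq_card, eq_div_iff hpos, mul_assoc,
    mul_comm (μ _).toReal, hindex, mul_one]

end Measure

section Profinite

variable {G : Type*} [Group G] [TopologicalSpace G] [IsTopologicalGroup G] [CompactSpace G]
  [TotallyDisconnectedSpace G]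

lemma ProfiniteGrp.exists_openNormalSubgroup_mul_subset {K U : Set G} (hK : IsCompact K)
    (hU : IsOpen U) (hKU : K ⊆ U) : ∃ N : OpenNormalSubgroup G, K * (N : Set G) ⊆ U := by
  obtain ⟨V, hV, hKV⟩ := compact_open_separated_mul_right hK hU hKU
  obtain ⟨N, hN⟩ := ProfiniteGrp.exist_openNormalSubgroup_sub_open_nhds_of_one isOpen_interior
    (mem_interior_iff_mem_nhds.2 hV)
  exact ⟨N, (Set.mul_subset_mul_left (hN.trans interior_subset)).trans hKV⟩

lemma ProfiniteGrp.exists_openNormalSubgroup_measure_mul_lt [MeasurableSpace G]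
    (μ : Measure G) [μ.OuterRegular] {K : Set G} (hK : IsCompact K) {r : ℝ≥0∞} (hr : μ K < r) :
    ∃ N : OpenNormalSubgroup G, μ (K * (N : Set G)) < r := by
  obtain ⟨U, hKU, hU, hUr⟩ := K.exists_isOpen_lt_of_lt r hr
  obtain ⟨N, hN⟩ := exists_openNormalSubgroup_mul_subset hK hU hKU
  exact ⟨N, (measure_mono hN).trans_lt hUr⟩

end Profinite

theorem haar_closed_eq_sInf_quotient_ratio_general {G : Type*} [Group G] [TopologicalSpace G]
    [IsTopologicalGroup G] [CompactSpace G] [TotallyDisconnectedSpace G]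
    [MeasurableSpace G] [BorelSpace G]
    (μ : Measure G) [μ.IsHaarMeasure] [IsProbabilityMeasure μ]
    (A : Set G) (hA : IsClosed A) :
    (μ A).toReal = sInf {ρ : ℝ | ∃ N : Subgroup G, N.Normal ∧ IsOpen (N : Set G) ∧
        ρ = (((QuotientGroup.mk : G → G ⧸ N) '' A).ncard : ℝ) / Nat.card (G ⧸ N)} := by
  have hratio (N : Subgroup G) (hN : IsOpen (N : Set G)) :
      (((QuotientGroup.mk : G → G ⧸ N) '' A).ncard : ℝ) / Nat.card (G ⧸ N)
        = (μ (A * N)).toReal := by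
    have := N.quotient_finite_of_isOpen hN
    have := N.finiteIndex_of_finite_quotient
    rw [← QuotientGroup.preimage_image_mk_eq_mul,
      toReal_measure_preimage_quotientGroup_mk μ N hN.measurableSet]
  refine (csInf_eq_of_forall_ge_of_forall_gt_exists_lt ?_ ?_ ?_).symm
  · exact ⟨_, ⊤, inferInstance, by simp, rfl⟩
  · rintro _ ⟨N, -, hN, rfl⟩
    rw [hratio N hN]
    exact ENNReal.toReal_mono (measure_ne_top μ _)
      (measure_mono (Set.subset_mul_left A N.one_mem))
  · intro r hr
    obtain ⟨N, hN⟩ := ProfiniteGrp.exists_openNormalSubgroup_measure_mul_lt μ hA.isCompact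
      ((ENNReal.lt_ofReal_iff_toReal_lt (measure_ne_top μ A)).2 hr)
    exact ⟨_, ⟨N, N.isNormal', N.isOpen, rfl⟩,
      (hratio N N.isOpen).trans_lt (ENNReal.toReal_lt_of_lt_ofReal hN)⟩

/-- For a profinite group `G` with normalized Haar measure `μ` and a closed
subset `A` with `μ A > 0`, the measure `μ A` is the infimum over normal open subgroups
`N` of the ratios `|AN/N| / |G/N|`, where `AN/N` is the image of `A` in `G ⧸ N`. -/
theorem haar_closed_eq_sInf_quotient_ratio {G : Type*} [Group G] [TopologicalSpace G]
    [IsTopologicalGroup G] [CompactSpace G] [TotallyDisconnectedSpace G] [T2Space G]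
    [MeasurableSpace G] [BorelSpace G]
    (μ : Measure G) [μ.IsHaarMeasure] [IsProbabilityMeasure μ]
    (A : Set G) (hA : IsClosed A) (hApos : 0 < μ A) :
    (μ A).toReal = sInf {ρ : ℝ | ∃ N : Subgroup G, N.Normal ∧ IsOpen (N : Set G) ∧
        ρ = (((QuotientGroup.mk : G → G ⧸ N) '' A).ncard : ℝ) / Nat.card (G ⧸ N)} :=
  haar_closed_eq_sInf_quotient_ratio_general μ A hA
end

section
/- Let G be a group that is nilpotent of class at most 3, and let α be an automorphism of G with α³ = id. Suppose x, g ∈ G are such that x x^α x^{α²} = 1 and (gx)(gx)^α(gx)^{α²} = 1, and moreover [a,b,c] = 1 whenever a, b, c ∈ {x, x^α, x^{α²}, h} with at least two of a,b,c among {x, x^α, x^{α²}}, for all h ∈ G. Then (g g^α g^{α²})⁻¹ = [x, g^α]·[x, g^α, g^{α²}]·[g^{α²}, x^{α²}]. -/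
/-!
With `xᵢ = x^{αⁱ⁻¹}` and `gᵢ = g^{αⁱ⁻¹}`, pushing every `xᵢ` in `(g₁x₁)(g₂x₂)(g₃x₃)` to the
right gives `g₁g₂g₃ · x₁^{g₂g₃} x₂^{g₃} x₃`. Expanding the conjugates as `x^g = x[x,g]` and `x₁^{g₂g₃} = x₁[x₁,g₃][x₁,g₂][x₁,g₂,g₃]`, the
hypotheses on weight-3 commutators let all the `xᵢ` be collected into `x₁x₂x₃ = 1`, and in class
`≤ 3` the remaining weight-2 and weight-3 commutators commute. The same collection applied to
`[g₃,x₃] = (x₁x₂)^{g₃} x₃` gives `[g₃,x₃] = [x₁,g₃][x₂,g₃]`.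
-/

/-- The commutator `[a,b] = a⁻¹ b⁻¹ a b` and `[a,b,c] = [[a,b],c]`. -/
def pcomm {G : Type*} [Group G] (a b : G) : G := a⁻¹ * b⁻¹ * a * b

open scoped commutatorElement

section Commutators

variable {G : Type*} [Group G]

lemma pcomm_eq_commutatorElement (a b : G) : pcomm a b = ⁅a⁻¹, b⁻¹⁆ := by
  rw [commutatorElement_def, pcomm]; group

lemma inv_mul_mul_eq_mul_pcomm (a b : G) : b⁻¹ * a * b = a * pcomm a b := by
  rw [pcomm]; group

lemma pcomm_mul_right (a b c : G) :
    pcomm a (b * c) = pcomm a c * (pcomm a b * pcomm (pcomm a b) c) := by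
  simp only [pcomm]; group

lemma commute_of_pcomm_eq_one {a b : G} (h : pcomm a b = 1) : Commute a b := by
  rw [pcomm_eq_commutatorElement, commutatorElement_eq_one_iff_commute] at h
  simpa using h

lemma mul_mul_mul_eq_of_commute {a b c w v : G} (hwb : Commute w b) (hwc : Commute w c)
    (hvc : Commute v c) : a * w * (b * v) * c = a * b * c * (w * v) :=
  calc a * w * (b * v) * c = a * (w * b) * (v * c) := by group
    _ = a * (b * w) * (c * v) := by rw [hwb.eq, hvc.eq]
    _ = a * b * (w * c) * v := by group
    _ = a * b * (c * w) * v := by rw [hwc.eq]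
    _ = a * b * c * (w * v) := by group

lemma pcomm_eq_mul_of_mul_mul_eq_one {x₁ x₂ x₃ g : G} (hx : x₁ * x₂ * x₃ = 1)
    (h₁₂ : Commute (pcomm x₁ g) x₂) (h₁₃ : Commute (pcomm x₁ g) x₃)
    (h₂₃ : Commute (pcomm x₂ g) x₃) : pcomm g x₃ = pcomm x₁ g * pcomm x₂ g :=
  calc pcomm g x₃ = g⁻¹ * x₁ * g * (g⁻¹ * x₂ * g) * x₃ := by
        rw [pcomm, inv_eq_of_mul_eq_one_left hx]; group
    _ = x₁ * pcomm x₁ g * (x₂ * pcomm x₂ g) * x₃ := by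
        rw [inv_mul_mul_eq_mul_pcomm, inv_mul_mul_eq_mul_pcomm]
    _ = pcomm x₁ g * pcomm x₂ g := by rw [mul_mul_mul_eq_of_commute h₁₂ h₁₃ h₂₃, hx, one_mul]

end Commutators

namespace Subgroup

variable {G : Type*} [Group G]

lemma pcomm_mem_lowerCentralSeries_succ {S : Subgroup G} {n : ℕ} {u c : G}
    (hu : u ∈ S.lowerCentralSeries n) (hc : c ∈ S) :
    pcomm u c ∈ S.lowerCentralSeries (n + 1) := by
  rw [pcomm_eq_commutatorElement, lowerCentralSeries_succ]
  exact commutator_mem_commutator (inv_mem hu) (inv_mem hc)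

lemma pcomm_mem_top_lowerCentralSeries_one (a b : G) :
    pcomm a b ∈ (⊤ : Subgroup G).lowerCentralSeries 1 :=
  pcomm_mem_lowerCentralSeries_succ (mem_top a) (mem_top b)

lemma commute_of_mem_lowerCentralSeries {S : Subgroup G} {n : ℕ}
    (hS : S.lowerCentralSeries (n + 1) = ⊥) {u z : G} (hu : u ∈ S.lowerCentralSeries n)
    (hz : z ∈ S) : Commute u z := by
  have h := commutator_mem_commutator hu hz
  rw [← lowerCentralSeries_succ, hS, mem_bot] at h
  exact commutatorElement_eq_one_iff_commute.mp h

/-- The three subgroups lemma gives `⁅γ₂, γ₂⁆ ≤ γ₄`. -/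
lemma commute_of_mem_top_lowerCentralSeries_one
    (hnil : (⊤ : Subgroup G).lowerCentralSeries 3 = ⊥) {u v : G}
    (hu : u ∈ (⊤ : Subgroup G).lowerCentralSeries 1)
    (hv : v ∈ (⊤ : Subgroup G).lowerCentralSeries 1) : Commute u v := by
  have hγ4 : ⁅⁅⁅(⊤ : Subgroup G), ⊤⁆, ⊤⁆, ⊤⁆ = ⊥ := hnil
  have hγ2 : ⁅⁅(⊤ : Subgroup G), ⊤⁆, ⁅(⊤ : Subgroup G), ⊤⁆⁆ = ⊥ :=
    commutator_commutator_eq_bot_of_rotate (by rwa [commutator_comm ⊤ ⁅⊤, ⊤⁆]) hγ4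
  have h : ⁅u, v⁆ ∈ (⊥ : Subgroup G) := hγ2 ▸ commutator_mem_commutator hu hv
  exact commutatorElement_eq_one_iff_commute.mp (mem_bot.mp h)

end Subgroup

section ClassThree

variable {G : Type*} [Group G] (hnil : (⊤ : Subgroup G).lowerCentralSeries 3 = ⊥)
include hnil

lemma commute_pcomm_pcomm_left (a b c z : G) : Commute (pcomm (pcomm a b) c) z :=
  Subgroup.commute_of_mem_lowerCentralSeries hnil
    (Subgroup.pcomm_mem_lowerCentralSeries_succ
      (Subgroup.pcomm_mem_top_lowerCentralSeries_one a b) (Subgroup.mem_top c))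
    (Subgroup.mem_top z)

lemma commute_pcomm_pcomm (a b c d : G) : Commute (pcomm a b) (pcomm c d) :=
  Subgroup.commute_of_mem_top_lowerCentralSeries_one hnil
    (Subgroup.pcomm_mem_top_lowerCentralSeries_one a b)
    (Subgroup.pcomm_mem_top_lowerCentralSeries_one c d)

lemma inv_mul_mul_eq_of_mul_mul_eq_one {x₁ x₂ x₃ g₁ g₂ g₃ : G} (hx : x₁ * x₂ * x₃ = 1)
    (hgx : g₁ * x₁ * (g₂ * x₂) * (g₃ * x₃) = 1)
    (hX : ∀ h : G, ∀ a ∈ ({x₁, x₂, x₃} : Set G), ∀ b ∈ ({x₁, x₂, x₃} : Set G),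
      Commute (pcomm a h) b) :
    (g₁ * g₂ * g₃)⁻¹ = pcomm x₁ g₂ * pcomm (pcomm x₁ g₂) g₃ * pcomm g₃ x₃ := by
  set c₁₂ := pcomm x₁ g₂
  set c₁₃ := pcomm x₁ g₃
  set c₂₃ := pcomm x₂ g₃
  set t := pcomm c₁₂ g₃
  have ht : ∀ z, Commute t z := commute_pcomm_pcomm_left hnil x₁ g₂ g₃
  have hw : ∀ b ∈ ({x₁, x₂, x₃} : Set G), Commute (c₁₃ * (c₁₂ * t)) b := fun b hb =>
    (hX g₃ x₁ (by simp) b hb).mul_left ((hX g₂ x₁ (by simp) b hb).mul_left (ht b))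
  have hconj₁ : (g₂ * g₃)⁻¹ * x₁ * (g₂ * g₃) = x₁ * (c₁₃ * (c₁₂ * t)) := by
    rw [inv_mul_mul_eq_mul_pcomm, pcomm_mul_right]
  have hprod : g₁ * g₂ * g₃ * (c₁₃ * (c₁₂ * t) * c₂₃) = 1 :=
    calc g₁ * g₂ * g₃ * (c₁₃ * (c₁₂ * t) * c₂₃)
        = g₁ * g₂ * g₃ * (x₁ * x₂ * x₃ * (c₁₃ * (c₁₂ * t) * c₂₃)) := by rw [hx, one_mul]
      _ = g₁ * g₂ * g₃ * (x₁ * (c₁₃ * (c₁₂ * t)) * (x₂ * c₂₃) * x₃) := by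
        rw [mul_mul_mul_eq_of_commute (hw x₂ (by simp)) (hw x₃ (by simp))
          (hX g₃ x₂ (by simp) x₃ (by simp))]
      _ = g₁ * g₂ * g₃ * ((g₂ * g₃)⁻¹ * x₁ * (g₂ * g₃) * (g₃⁻¹ * x₂ * g₃) * x₃) := by
        rw [hconj₁, inv_mul_mul_eq_mul_pcomm]
      _ = 1 := by rw [← hgx]; group
  have hc : Commute (c₁₂ * t) c₁₃ :=
    (commute_pcomm_pcomm hnil x₁ g₂ x₁ g₃).mul_left (ht c₁₃)
  rw [inv_eq_of_mul_eq_one_right hprod, ← hc.eq, mul_assoc,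
    pcomm_eq_mul_of_mul_mul_eq_one hx (hX g₃ x₁ (by simp) x₂ (by simp))
      (hX g₃ x₁ (by simp) x₃ (by simp)) (hX g₃ x₂ (by simp) x₃ (by simp))]

end ClassThree

theorem twisted_cube_commutator_formula_general {G : Type*} [Group G]
    (hnil : (⊤ : Subgroup G).lowerCentralSeries 3 = ⊥)
    (α : MulAut G) (x g : G)
    (hx : x * α x * (α ^ 2) x = 1)
    (hgx : (g * x) * α (g * x) * (α ^ 2) (g * x) = 1)
    (hcomm : ∀ h a b c : G,
      a ∈ ({x, α x, (α ^ 2) x, h} : Set G) →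
      b ∈ ({x, α x, (α ^ 2) x, h} : Set G) →
      c ∈ ({x, α x, (α ^ 2) x, h} : Set G) →
      ((a ∈ ({x, α x, (α ^ 2) x} : Set G) ∧ b ∈ ({x, α x, (α ^ 2) x} : Set G)) ∨
       (a ∈ ({x, α x, (α ^ 2) x} : Set G) ∧ c ∈ ({x, α x, (α ^ 2) x} : Set G)) ∨
       (b ∈ ({x, α x, (α ^ 2) x} : Set G) ∧ c ∈ ({x, α x, (α ^ 2) x} : Set G))) →
      pcomm (pcomm a b) c = 1) :
    (g * α g * (α ^ 2) g)⁻¹ =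
      pcomm x (α g) * pcomm (pcomm x (α g)) ((α ^ 2) g) *
        pcomm ((α ^ 2) g) ((α ^ 2) x) := by
  rw [map_mul, map_mul] at hgx
  refine inv_mul_mul_eq_of_mul_mul_eq_one hnil hx hgx fun h a ha b hb =>
    commute_of_pcomm_eq_one (hcomm h a h b ?_ (by simp) ?_ (.inr (.inl ⟨ha, hb⟩)))
  · rcases ha with rfl | rfl | rfl <;> simp
  · rcases hb with rfl | rfl | rfl <;> simp

/-- Let `G` be nilpotent of class at most `3` and `α` an automorphism with
`α ^ 3 = 1`.  Suppose `x, g ∈ G` satisfy `x * x^α * x^{α²} = 1` and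
`(g x) * (g x)^α * (g x)^{α²} = 1`, and that `[a,b,c] = 1` whenever
`a, b, c ∈ {x, x^α, x^{α²}, h}` with at least two of `a, b, c` among
`{x, x^α, x^{α²}}`, for every `h ∈ G`.  Then
`(g * g^α * g^{α²})⁻¹ = [x, g^α] * [x, g^α, g^{α²}] * [g^{α²}, x^{α²}]`. -/
theorem twisted_cube_commutator_formula {G : Type*} [Group G]
    (hnil : (⊤ : Subgroup G).lowerCentralSeries 3 = ⊥)
    (α : MulAut G) (hα : α ^ 3 = 1) (x g : G)
    (hx : x * α x * (α ^ 2) x = 1)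
    (hgx : (g * x) * α (g * x) * (α ^ 2) (g * x) = 1)
    (hcomm : ∀ h a b c : G,
      a ∈ ({x, α x, (α ^ 2) x, h} : Set G) →
      b ∈ ({x, α x, (α ^ 2) x, h} : Set G) →
      c ∈ ({x, α x, (α ^ 2) x, h} : Set G) →
      ((a ∈ ({x, α x, (α ^ 2) x} : Set G) ∧ b ∈ ({x, α x, (α ^ 2) x} : Set G)) ∨
       (a ∈ ({x, α x, (α ^ 2) x} : Set G) ∧ c ∈ ({x, α x, (α ^ 2) x} : Set G)) ∨
       (b ∈ ({x, α x, (α ^ 2) x} : Set G) ∧ c ∈ ({x, α x, (α ^ 2) x} : Set G))) →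
      pcomm (pcomm a b) c = 1) :
    (g * α g * (α ^ 2) g)⁻¹ =
      pcomm x (α g) * pcomm (pcomm x (α g)) ((α ^ 2) g) *
        pcomm ((α ^ 2) g) ((α ^ 2) x) :=
  twisted_cube_commutator_formula_general hnil α x g hx hgx hcomm
end
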